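/- Let u_i, v_j ∈ ℝ^d, τ > 0, s : Fin m → Fin m → ℝ, and define the extended InfoNCE loss L_eNCE = -(1/m)·Σ_{i,j} s_{ij}·(log P^V_{ij} + log P^T_{ij}), with P^V_{ij} = exp(⟨u_i,v_j⟩/τ)/Σ_k exp(⟨u_i,v_k⟩/τ) and P^T_{ij} = exp(⟨u_i,v_j⟩/τ)/Σ_k exp(⟨u_k,v_j⟩/τ). Then the gradient of L_eNCE with respect to u_n equals Σ_j W_j v_j where W_j = (s_{n·}·P^V_{nj} + s_{·j}·P^T_{nj} - 2 s_{nj})/(m τ), s_{n·} = Σ_k s_{nk} and s_{·j} = Σ_k s_{kj}. -/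

import Mathlib

/-!
Write `a i j = ⟪u i, v j⟫ / τ` for the logits. The loss is a weighted sum of log-softmax terms of
the logits, taken along rows (`P^V`) and along columns (`P^T`). The gradient of a log-softmax term
is `∇a_j - ∑ₖ Pₖ ∇a_k`, and only the logits of row `n` depend on `u n`, with `∇ a n j = v j / τ`.
Collecting the coefficient of each `v j` gives `W j`.
-/

open RealInnerProductSpace Finset InnerProductSpace

section GradientCalculus

variable {F : Type*} [NormedAddCommGroup F] [InnerProductSpace ℝ F] [CompleteSpace F]
  {f g : F → ℝ} {f' g' x : F}

theorem HasGradientAt.add (hf : HasGradientAt f f' x) (hg : HasGradientAt g g' x) :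
    HasGradientAt (fun w => f w + g w) (f' + g') x := by
  rw [hasGradientAt_iff_hasFDerivAt, map_add]
  exact HasFDerivAt.add hf hg

theorem HasGradientAt.sub (hf : HasGradientAt f f' x) (hg : HasGradientAt g g' x) :
    HasGradientAt (fun w => f w - g w) (f' - g') x := by
  rw [hasGradientAt_iff_hasFDerivAt, map_sub]
  exact HasFDerivAt.sub hf hg

theorem HasGradientAt.const_mul (c : ℝ) (hf : HasGradientAt f f' x) :
    HasGradientAt (fun w => c * f w) (c • f') x := by
  rw [hasGradientAt_iff_hasFDerivAt, map_smul]
  exact HasFDerivAt.const_mul hf c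

theorem HasGradientAt.fun_sum {ι : Type*} {s : Finset ι} {f : ι → F → ℝ} {f' : ι → F}
    (hf : ∀ i ∈ s, HasGradientAt (f i) (f' i) x) :
    HasGradientAt (fun w => ∑ i ∈ s, f i w) (∑ i ∈ s, f' i) x := by
  rw [hasGradientAt_iff_hasFDerivAt, map_sum]
  exact HasFDerivAt.fun_sum hf

theorem hasGradientAt_inner_div (y : F) (τ : ℝ) :
    HasGradientAt (fun w => ⟪w, y⟫ / τ) (τ⁻¹ • y) x := by
  rw [hasGradientAt_iff_hasFDerivAt]
  refine (toDual ℝ F (τ⁻¹ • y)).hasFDerivAt.congr_of_eventuallyEq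
    (Filter.Eventually.of_forall fun w => ?_)
  simp [real_inner_comm, div_eq_inv_mul]

theorem hasGradientAt_inner_update_div {ι : Type*} [DecidableEq ι] (u : ι → F) (n i : ι)
    (y : F) (τ : ℝ) :
    HasGradientAt (fun w => ⟪Function.update u n w i, y⟫ / τ)
      (if i = n then τ⁻¹ • y else 0) x := by
  by_cases hi : i = n
  · subst hi
    simpa using hasGradientAt_inner_div y τ
  · simpa [hi] using hasGradientAt_const x (⟪u i, y⟫ / τ)

theorem HasGradientAt.log_sum_exp {ι : Type*} [Fintype ι] [Nonempty ι] {f : ι → F → ℝ}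
    {f' : ι → F} (hf : ∀ k, HasGradientAt (f k) (f' k) x) :
    HasGradientAt (fun w => Real.log (∑ k, Real.exp (f k w)))
      (∑ k, (Real.exp (f k x) / ∑ l, Real.exp (f l x)) • f' k) x := by
  have hpos : 0 < ∑ l, Real.exp (f l x) :=
    sum_pos (fun l _ => Real.exp_pos _) univ_nonempty
  have h := (HasFDerivAt.fun_sum fun k (_ : k ∈ univ) => (hf k).hasFDerivAt.exp).log hpos.ne'
  rw [hasGradientAt_iff_hasFDerivAt]
  refine h.congr_fderiv ?_
  simp only [map_sum, map_smul, smul_sum, smul_smul, div_eq_inv_mul]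

theorem HasGradientAt.log_softmax {ι : Type*} [Fintype ι] [Nonempty ι] {f : ι → F → ℝ}
    {f' : ι → F} (hf : ∀ k, HasGradientAt (f k) (f' k) x) (j : ι) :
    HasGradientAt (fun w => Real.log (Real.exp (f j w) / ∑ k, Real.exp (f k w)))
      (f' j - ∑ k, (Real.exp (f k x) / ∑ l, Real.exp (f l x)) • f' k) x := by
  refine ((hf j).sub (HasGradientAt.log_sum_exp hf)).congr_of_eventuallyEq
    (Filter.Eventually.of_forall fun w => ?_)
  dsimp only
  rw [Real.log_div (Real.exp_ne_zero _), Real.log_exp]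
  exact (sum_pos (fun l _ => Real.exp_pos _) univ_nonempty).ne'

end GradientCalculus

/-- Collects the gradients `s i j • (∇ log P^V i j + ∇ log P^T i j)` when `∇ a i j` vanishes off
row `n` and equals `ℓ j` on it; `p` and `q` play the roles of `P^V` and `P^T`. -/
theorem sum_sum_smul_logSoftmax_grad {ι M : Type*} [Fintype ι] [DecidableEq ι] [AddCommGroup M]
    [Module ℝ M] (s p q : ι → ι → ℝ) (ℓ : ι → M) (n : ι) :
    ∑ i, ∑ j, s i j • (((if i = n then ℓ j else 0) - ∑ k, p i k • (if i = n then ℓ k else 0)) +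
        ((if i = n then ℓ j else 0) - ∑ k, q k j • (if k = n then ℓ j else 0))) =
      ∑ j, (2 * s n j - (∑ k, s n k) * p n j - (∑ k, s k j) * q n j) • ℓ j := by
  simp only [smul_ite, smul_zero, sum_ite_irrel, sum_const_zero, sum_ite_eq', mem_univ,
    ↓reduceIte, smul_add, smul_sub, sum_add_distrib, sum_sub_distrib]
  simp only [sub_smul, two_mul, add_smul, mul_smul, sum_sub_distrib, sum_add_distrib,
    ← smul_sum, ← sum_smul]
  rw [sum_comm (f := fun i j => s i j • q n j • ℓ j)]
  simp only [sum_smul]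
  abel

theorem gradient_eNCE_general {m d : ℕ}
    (u v : Fin m → EuclideanSpace ℝ (Fin d))
    (s : Fin m → Fin m → ℝ) (τ : ℝ) (n : Fin m) :
    HasGradientAt
      (fun w : EuclideanSpace ℝ (Fin d) =>
        -(1 / (m : ℝ)) * ∑ i, ∑ j, s i j *
          (Real.log (Real.exp (⟪Function.update u n w i, v j⟫ / τ) /
              ∑ k, Real.exp (⟪Function.update u n w i, v k⟫ / τ)) +
           Real.log (Real.exp (⟪Function.update u n w i, v j⟫ / τ) /
              ∑ k, Real.exp (⟪Function.update u n w k, v j⟫ / τ))))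
      (∑ j, (((∑ k, s n k) *
            (Real.exp (⟪u n, v j⟫ / τ) / ∑ k, Real.exp (⟪u n, v k⟫ / τ)) +
          (∑ k, s k j) *
            (Real.exp (⟪u n, v j⟫ / τ) / ∑ k, Real.exp (⟪u k, v j⟫ / τ)) -
          2 * s n j) / (m * τ)) • v j)
      (u n) := by
  have : Nonempty (Fin m) := ⟨n⟩
  have hlogit : ∀ i j, HasGradientAt (fun w => ⟪Function.update u n w i, v j⟫ / τ)
      (if i = n then τ⁻¹ • v j else 0) (u n) :=
    fun i j => hasGradientAt_inner_update_div u n i (v j) τ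
  have hloss := (HasGradientAt.fun_sum fun i (_ : i ∈ univ) =>
    HasGradientAt.fun_sum fun j (_ : j ∈ univ) =>
      ((HasGradientAt.log_softmax (hlogit i) j).add
        (HasGradientAt.log_softmax (fun k => hlogit k j) i)).const_mul (s i j)).const_mul
    (-(1 / (m : ℝ)))
  rw [Function.update_eq_self] at hloss
  convert hloss using 1
  rw [sum_sum_smul_logSoftmax_grad, smul_sum]
  refine sum_congr rfl fun j _ => ?_
  rw [smul_smul, smul_smul]
  congr 1
  field_simp
  ring

theorem gradient_eNCE {m d : ℕ} (hm : 1 ≤ m) (hd : 1 ≤ d)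
    (u v : Fin m → EuclideanSpace ℝ (Fin d))
    (s : Fin m → Fin m → ℝ) (τ : ℝ) (hτ : 0 < τ) (n : Fin m) :
    HasGradientAt
      (fun w : EuclideanSpace ℝ (Fin d) =>
        -(1 / (m : ℝ)) * ∑ i, ∑ j, s i j *
          (Real.log (Real.exp (⟪Function.update u n w i, v j⟫ / τ) /
              ∑ k, Real.exp (⟪Function.update u n w i, v k⟫ / τ)) +
           Real.log (Real.exp (⟪Function.update u n w i, v j⟫ / τ) /
              ∑ k, Real.exp (⟪Function.update u n w k, v j⟫ / τ))))
      (∑ j, (((∑ k, s n k) *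
            (Real.exp (⟪u n, v j⟫ / τ) / ∑ k, Real.exp (⟪u n, v k⟫ / τ)) +
          (∑ k, s k j) *
            (Real.exp (⟪u n, v j⟫ / τ) / ∑ k, Real.exp (⟪u k, v j⟫ / τ)) -
          2 * s n j) / (m * τ)) • v j)
      (u n) :=
  gradient_eNCE_general u v s τ n
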